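/- The ℂ-span of {e_μ p e_μ : p ∈ P_μ} equals the ℂ-span of {e_μ l e_μ : l ∈ L_μ} as subspaces of ℂ[G]; that is, e_μ ℂ[P_μ] e_μ = e_μ ℂ[L_μ] e_μ. -/

import Mathlib

open Matrix MonoidAlgebra

/-- `g` is upper triangular with all diagonal entries `1` (unipotent upper triangular). -/
def IsUU {F : Type} [Field F] {n : ℕ} (g : Matrix (Fin n) (Fin n) F) : Prop :=
  (∀ i j : Fin n, j < i → g i j = 0) ∧ (∀ i : Fin n, g i i = 1)

instance {F : Type} [Field F] [DecidableEq F] {n : ℕ} (g : Matrix (Fin n) (Fin n) F) :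
    Decidable (IsUU g) :=
  haveI : ∀ i : Fin n, Decidable (∀ j : Fin n, j < i → g i j = 0) :=
    fun _ => Fintype.decidableForallFintype
  decidable_of_iff ((∀ i j : Fin n, j < i → g i j = 0) ∧ (∀ i : Fin n, g i i = 1)) Iff.rfl

/-- The set `B_μ = {μ₁, μ₁+μ₂, …, μ₁+⋯+μ_ℓ}` of partial sums of the composition `μ`. -/
def Bset (μ : List ℕ) : Finset ℕ :=
  (Finset.range μ.length).image fun k => (μ.take (k + 1)).sum

/-- The linear character `ψ_μ` of `U`, as a function on all of `GL n F`:
`ψ_μ(u) = ψ(Σ u_{i,i+1})`, where the sum runs over the superdiagonal positions whose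
(1-based) row index `i` satisfies `i ∉ B_μ`. -/
noncomputable def psiMu {F : Type} [Field F] [Fintype F] [DecidableEq F]
    (ψ : AddChar F ℂ) (n : ℕ) (μ : List ℕ) (g : GL (Fin n) F) : ℂ :=
  ψ (∑ p : Fin n × Fin n,
      if (p.1 : ℕ) + 1 = (p.2 : ℕ) ∧ (p.1 : ℕ) + 1 ∉ Bset μ
      then (g : Matrix (Fin n) (Fin n) F) p.1 p.2 else 0)

/-- The subgroup `U` of unipotent upper triangular matrices, as a finset of `GL n F`. -/
noncomputable def Uset (F : Type) [Field F] [Fintype F] [DecidableEq F] (n : ℕ) :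
    Finset (GL (Fin n) F) :=
  Finset.univ.filter fun g => IsUU (g : Matrix (Fin n) (Fin n) F)

/-- The idempotent `e_μ = (1/|U|) Σ_{u ∈ U} ψ_μ(u⁻¹) u` of the group algebra `ℂ[GL n F]`. -/
noncomputable def eMu {F : Type} [Field F] [Fintype F] [DecidableEq F]
    (ψ : AddChar F ℂ) (n : ℕ) (μ : List ℕ) : MonoidAlgebra ℂ (GL (Fin n) F) :=
  ((Uset F n).card : ℂ)⁻¹ • ∑ u ∈ Uset F n, MonoidAlgebra.single u (psiMu ψ n μ u⁻¹)

/-- A matrix is monomial when it has exactly one nonzero entry in each row and column. -/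
def IsMonomialMat {F : Type} [Field F] {n : ℕ} (g : Matrix (Fin n) (Fin n) F) : Prop :=
  (∀ i : Fin n, ∃! j : Fin n, g i j ≠ 0) ∧ (∀ j : Fin n, ∃! i : Fin n, g i j ≠ 0)

/-- The set `N_μ` of monomial matrices `v` such that whenever `u, vuv⁻¹ ∈ U` one has
`ψ_μ(u) = ψ_μ(vuv⁻¹)`. -/
noncomputable def Nmu {F : Type} [Field F] [Fintype F] [DecidableEq F]
    (ψ : AddChar F ℂ) (n : ℕ) (μ : List ℕ) : Set (GL (Fin n) F) :=
  {v | IsMonomialMat (v : Matrix (Fin n) (Fin n) F) ∧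
    ∀ u : GL (Fin n) F, IsUU (u : Matrix (Fin n) (Fin n) F) →
      IsUU ((v * u * v⁻¹ : GL (Fin n) F) : Matrix (Fin n) (Fin n) F) →
      psiMu ψ n μ u = psiMu ψ n μ (v * u * v⁻¹)}

/-- The set `M_μ` of `ℓ×ℓ` matrices of monic polynomials with nonzero constant term whose
degree row sums and degree column sums are both equal to `μ`. -/
def Mmu (F : Type) [Field F] (μ : List ℕ) :
    Set (Matrix (Fin μ.length) (Fin μ.length) (Polynomial F)) :=
  {a | (∀ i j, (a i j).Monic ∧ Polynomial.eval 0 (a i j) ≠ 0) ∧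
       (∀ i, (∑ j, (a i j).natDegree) = μ.get i) ∧
       (∀ j, (∑ i, (a i j).natDegree) = μ.get j)}

/-- The unipotent Hecke algebra `H_μ = e_μ ℂ[G] e_μ` as a subspace of the group algebra. -/
noncomputable def Hsub {F : Type} [Field F] [Fintype F] [DecidableEq F] {n : ℕ}
    (e : MonoidAlgebra ℂ (GL (Fin n) F)) : Submodule ℂ (MonoidAlgebra ℂ (GL (Fin n) F)) :=
  LinearMap.range ((LinearMap.mulLeft ℂ e).comp (LinearMap.mulRight ℂ e))

/-- Membership in the parabolic subgroup `P_μ`: block upper triangular with respect to the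
blocks of `μ` (whose boundaries are recorded by `B_μ`). -/
def inPmu {F : Type} [Field F] {n : ℕ} (μ : List ℕ) (g : Matrix (Fin n) (Fin n) F) : Prop :=
  ∀ i j : Fin n, (∃ b ∈ Bset μ, (j : ℕ) < b ∧ b ≤ (i : ℕ)) → g i j = 0

/-- Membership in the Levi subgroup `L_μ`: block diagonal with respect to the blocks of `μ`. -/
def inLmu {F : Type} [Field F] {n : ℕ} (μ : List ℕ) (g : Matrix (Fin n) (Fin n) F) : Prop :=
  ∀ i j : Fin n,
    (∃ b ∈ Bset μ, ((j : ℕ) < b ∧ b ≤ (i : ℕ)) ∨ ((i : ℕ) < b ∧ b ≤ (j : ℕ))) → g i j = 0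

section AuxSpanEPE

variable {F : Type} [Field F] {n : ℕ}

lemma IsUU.bt {g : Matrix (Fin n) (Fin n) F} (h : IsUU g) :
    g.BlockTriangular id := fun i j hij => h.1 i j hij

lemma IsUU.mul {a b : Matrix (Fin n) (Fin n) F} (ha : IsUU a) (hb : IsUU b) :
    IsUU (a * b) := by
  refine ⟨fun i j hij => ha.bt.mul hb.bt hij, fun i => ?_⟩
  rw [Matrix.mul_apply, Finset.sum_eq_single i]
  · rw [ha.2, hb.2, one_mul]
  · intro k _ hk
    rcases lt_or_gt_of_ne hk with h | h
    · rw [ha.1 i k h, zero_mul]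
    · rw [hb.1 k i h, mul_zero]
  · intro h; exact absurd (Finset.mem_univ i) h

lemma IsUU.inv (u : GL (Fin n) F) (hu : IsUU (u : Matrix (Fin n) (Fin n) F)) :
    IsUU ((u⁻¹ : GL (Fin n) F) : Matrix (Fin n) (Fin n) F) := by
  have hcoe : ((u⁻¹ : GL (Fin n) F) : Matrix (Fin n) (Fin n) F)
      = (u : Matrix (Fin n) (Fin n) F)⁻¹ := Matrix.coe_units_inv u
  haveI : Invertible (u : Matrix (Fin n) (Fin n) F) := u.invertible
  have hbt : ((u : Matrix (Fin n) (Fin n) F)⁻¹).BlockTriangular id :=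
    Matrix.blockTriangular_inv_of_blockTriangular hu.bt
  rw [hcoe]
  refine ⟨fun i j hij => hbt hij, fun i => ?_⟩
  have h1 : ((u : Matrix (Fin n) (Fin n) F) * (u : Matrix (Fin n) (Fin n) F)⁻¹) i i = 1 := by
    rw [Matrix.mul_inv_of_invertible, Matrix.one_apply_eq]
  rw [Matrix.mul_apply, Finset.sum_eq_single i] at h1
  · rwa [hu.2, one_mul] at h1
  · intro k _ hk
    rcases lt_or_gt_of_ne hk with h | h
    · rw [hu.1 i k h, zero_mul]
    · rw [hbt h, mul_zero]
  · intro h; exact absurd (Finset.mem_univ i) h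

lemma IsUU.entry_succ {a b : Matrix (Fin n) (Fin n) F} (ha : IsUU a) (hb : IsUU b)
    {i j : Fin n} (hij : (i : ℕ) + 1 = (j : ℕ)) :
    (a * b) i j = a i j + b i j := by
  have hij' : i < j := by omega
  rw [Matrix.mul_apply, Finset.sum_eq_add_of_mem i j (Finset.mem_univ i) (Finset.mem_univ j)
      (Fin.ne_of_lt hij')]
  · rw [ha.2, hb.2, one_mul, mul_one, add_comm]
  · intro k _ hk
    rcases hk with ⟨hki, hkj⟩
    rcases lt_or_gt_of_ne hki with h | h
    · rw [ha.1 i k h, zero_mul]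
    · have : j < k := by
        have h1 : (i : ℕ) < (k : ℕ) := h
        have h2 : (k : ℕ) ≠ (j : ℕ) := fun hh => hkj (Fin.ext hh)
        omega
      rw [hb.1 k j this, mul_zero]

variable [Fintype F] [DecidableEq F]

lemma psiMu_mul (ψ : AddChar F ℂ) (μ : List ℕ) {a b : GL (Fin n) F}
    (ha : IsUU (a : Matrix (Fin n) (Fin n) F)) (hb : IsUU (b : Matrix (Fin n) (Fin n) F)) :
    psiMu ψ n μ (a * b) = psiMu ψ n μ a * psiMu ψ n μ b := by
  unfold psiMu
  rw [← AddChar.map_add_eq_mul, ← Finset.sum_add_distrib]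
  congr 1
  refine Finset.sum_congr rfl fun p _ => ?_
  by_cases hc : (p.1 : ℕ) + 1 = (p.2 : ℕ) ∧ (p.1 : ℕ) + 1 ∉ Bset μ
  · rw [if_pos hc, if_pos hc, if_pos hc, Matrix.GeneralLinearGroup.coe_mul,
      ha.entry_succ hb hc.1]
  · rw [if_neg hc, if_neg hc, if_neg hc, add_zero]

lemma psiMu_one (ψ : AddChar F ℂ) (μ : List ℕ) :
    psiMu ψ n μ (1 : GL (Fin n) F) = 1 := by
  unfold psiMu
  rw [Finset.sum_eq_zero, AddChar.map_zero_eq_one]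
  intro p _
  split_ifs with hc
  · exact Matrix.one_apply_ne (fun h => by have := hc.1; omega)
  · rfl

lemma mem_Uset {u : GL (Fin n) F} :
    u ∈ Uset F n ↔ IsUU (u : Matrix (Fin n) (Fin n) F) := by
  simp [Uset]

lemma single_mul_eMu (ψ : AddChar F ℂ) (μ : List ℕ) (u : GL (Fin n) F)
    (hu : IsUU (u : Matrix (Fin n) (Fin n) F)) :
    MonoidAlgebra.single u (1 : ℂ) * eMu ψ n μ = psiMu ψ n μ u • eMu ψ n μ := by
  unfold eMu
  rw [mul_smul_comm, Finset.mul_sum, smul_smul, mul_comm, ← smul_smul]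
  congr 1
  simp_rw [MonoidAlgebra.single_mul_single, one_mul, Finset.smul_sum]
  simp_rw [MonoidAlgebra.smul_single']
  refine Finset.sum_nbij' (fun v => u * v) (fun w => u⁻¹ * w) ?_ ?_ ?_ ?_ ?_
  · intro v hv
    exact mem_Uset.2 (by rw [Matrix.GeneralLinearGroup.coe_mul]; exact hu.mul (mem_Uset.1 hv))
  · intro w hw
    refine mem_Uset.2 ?_
    rw [Matrix.GeneralLinearGroup.coe_mul]
    exact (IsUU.inv u hu).mul (mem_Uset.1 hw)
  · intro v _; rw [inv_mul_cancel_left]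
  · intro w _; rw [mul_inv_cancel_left]
  · intro v hv
    congr 1
    have hv' : IsUU ((v : GL (Fin n) F) : Matrix (Fin n) (Fin n) F) := mem_Uset.1 hv
    rw [_root_.mul_inv_rev, psiMu_mul ψ μ (IsUU.inv v hv') (IsUU.inv u hu),
      ← mul_assoc, mul_comm (psiMu ψ n μ u), mul_assoc, ← psiMu_mul ψ μ hu (IsUU.inv u hu),
      mul_inv_cancel, psiMu_one, mul_one]

def blk (μ : List ℕ) {n : ℕ} (i : Fin n) : ℕ :=
  ((Bset μ).filter fun b => b ≤ (i : ℕ)).card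

lemma blk_lt_iff (μ : List ℕ) {i j : Fin n} :
    blk μ j < blk μ i ↔ ∃ b ∈ Bset μ, (j : ℕ) < b ∧ b ≤ (i : ℕ) := by
  constructor
  · intro h
    by_contra hc
    push_neg at hc
    refine absurd (Finset.card_le_card fun b hb => ?_) (not_le.2 h)
    rw [Finset.mem_filter] at hb ⊢
    refine ⟨hb.1, ?_⟩
    by_contra hbj
    push_neg at hbj
    have := hc b hb.1 hbj
    omega
  · rintro ⟨b, hb, hjb, hbi⟩
    refine Finset.card_lt_card ⟨fun c hc => ?_, fun hsub => ?_⟩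
    · rw [Finset.mem_filter] at hc ⊢
      exact ⟨hc.1, le_trans hc.2 (by omega)⟩
    · have : b ∈ (Bset μ).filter fun c => c ≤ (j : ℕ) :=
        hsub (Finset.mem_filter.2 ⟨hb, hbi⟩)
      rw [Finset.mem_filter] at this
      omega

lemma blk_mono (μ : List ℕ) {i j : Fin n} (h : (i : ℕ) ≤ (j : ℕ)) : blk μ i ≤ blk μ j := by
  refine Finset.card_le_card fun b hb => ?_
  rw [Finset.mem_filter] at hb ⊢
  exact ⟨hb.1, le_trans hb.2 h⟩

lemma inPmu_bt {g : Matrix (Fin n) (Fin n) F} {μ : List ℕ} (h : inPmu μ g) :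
    g.BlockTriangular (blk μ) := fun i j hij => h i j ((blk_lt_iff μ).1 hij)

lemma decomp (μ : List ℕ) (p : GL (Fin n) F) (hp : inPmu μ (p : Matrix (Fin n) (Fin n) F)) :
    ∃ l u : GL (Fin n) F, inLmu μ (l : Matrix (Fin n) (Fin n) F) ∧
      IsUU ((u : GL (Fin n) F) : Matrix (Fin n) (Fin n) F) ∧ p = l * u := by
  set P : Matrix (Fin n) (Fin n) F := (p : Matrix (Fin n) (Fin n) F) with hPdef
  have hPbt : P.BlockTriangular (blk μ) := inPmu_bt hp
  set L : Matrix (Fin n) (Fin n) F :=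
    Matrix.of (fun i j => if blk μ i = blk μ j then P i j else 0) with hLdef
  have hLentry : ∀ i j, L i j = if blk μ i = blk μ j then P i j else 0 := fun i j => rfl
  have hLbt : L.BlockTriangular (blk μ) := by
    intro i j hij
    rw [hLentry, if_neg (by omega)]
  have hLoff : ∀ i j : Fin n, blk μ i ≠ blk μ j → L i j = 0 := by
    intro i j hij
    rw [hLentry, if_neg hij]
  -- determinants
  have hsq : ∀ a, L.toSquareBlock (blk μ) a = P.toSquareBlock (blk μ) a := by
    intro a
    ext i j
    simp only [Matrix.toSquareBlock_def, Matrix.of_apply]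
    rw [hLentry, if_pos (by rw [i.prop, j.prop])]
  have hdetL : L.det = P.det := by
    rw [hLbt.det, hPbt.det]
    exact Finset.prod_congr rfl fun a _ => by rw [hsq]
  have hdetP : IsUnit P.det := (Matrix.isUnit_iff_isUnit_det P).1 p.isUnit
  have hLunit : IsUnit L := (Matrix.isUnit_iff_isUnit_det L).2 (by rw [hdetL]; exact hdetP)
  haveI : Invertible L := hLunit.invertible
  -- inverse of L is block diagonal
  have hLinv_bt : (L⁻¹).BlockTriangular (blk μ) :=
    Matrix.blockTriangular_inv_of_blockTriangular hLbt
  have hLbt' : L.BlockTriangular (OrderDual.toDual ∘ blk μ) := by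
    intro i j hij
    have h2 : blk μ i < blk μ j := hij
    exact hLoff i j (ne_of_lt h2)
  have hLinv_bt' : (L⁻¹).BlockTriangular (OrderDual.toDual ∘ blk μ) :=
    Matrix.blockTriangular_inv_of_blockTriangular hLbt'
  have hLinv_off : ∀ i j : Fin n, blk μ i ≠ blk μ j → L⁻¹ i j = 0 := by
    intro i j hij
    rcases lt_or_gt_of_ne hij with h | h
    · exact hLinv_bt' h
    · exact hLinv_bt h
  -- the unipotent part
  set Umat : Matrix (Fin n) (Fin n) F := L⁻¹ * P with hUdef
  have hUblockdiag : ∀ i j : Fin n, blk μ i = blk μ j → Umat i j = (1 : Matrix (Fin n) (Fin n) F) i j := by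
    intro i j hij
    have : Umat i j = (L⁻¹ * L) i j := by
      show (L⁻¹ * P) i j = (L⁻¹ * L) i j
      rw [Matrix.mul_apply, Matrix.mul_apply]
      refine Finset.sum_congr rfl fun k _ => ?_
      by_cases hk : blk μ i = blk μ k
      · congr 1
        rw [hLentry, if_pos (by omega)]
      · rw [hLinv_off i k hk, zero_mul, zero_mul]
    rw [this, Matrix.inv_mul_of_invertible]
  have hUbt : Umat.BlockTriangular (blk μ) := hLinv_bt.mul hPbt
  have hUisUU : IsUU Umat := by
    constructor
    · intro i j hij
      rcases lt_or_eq_of_le (blk_mono μ (le_of_lt hij : (j : ℕ) ≤ (i : ℕ))) with h | h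
      · exact hUbt h
      · rw [hUblockdiag i j h.symm]
        exact Matrix.one_apply_ne (Fin.ne_of_lt hij).symm
    · intro i
      rw [hUblockdiag i i rfl, Matrix.one_apply_eq]
  refine ⟨hLunit.unit, hLunit.unit⁻¹ * p, ?_, ?_, (mul_inv_cancel_left _ _).symm⟩
  · intro i j h
    obtain ⟨b, hb, hcase⟩ := h
    have hne : blk μ i ≠ blk μ j := by
      rcases hcase with h | h
      · exact ne_of_gt ((blk_lt_iff μ).2 ⟨b, hb, h⟩)
      · exact ne_of_lt ((blk_lt_iff μ).2 ⟨b, hb, h⟩)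
    show ((hLunit.unit : GL (Fin n) F) : Matrix (Fin n) (Fin n) F) i j = 0
    rw [hLunit.unit_spec]
    exact hLoff i j hne
  · have hcoe : ((hLunit.unit⁻¹ * p : GL (Fin n) F) : Matrix (Fin n) (Fin n) F) = Umat := by
      rw [Matrix.GeneralLinearGroup.coe_mul, Matrix.coe_units_inv, hLunit.unit_spec]
    rw [hcoe]
    exact hUisUU

end AuxSpanEPE

/-- `e_μ ℂ[P_μ] e_μ = e_μ ℂ[L_μ] e_μ` as subspaces of `ℂ[G]`. -/
theorem span_ePe_eq_span_eLe {F : Type} [Field F] [Fintype F] [DecidableEq F]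
    (n : ℕ) (hn : 1 ≤ n) (ψ : AddChar F ℂ) (hψ : ψ ≠ 1)
    (μ : List ℕ) (hpos : ∀ x ∈ μ, 0 < x) (hsum : μ.sum = n) :
    Submodule.span ℂ {x : MonoidAlgebra ℂ (GL (Fin n) F) |
        ∃ p : GL (Fin n) F, inPmu μ (p : Matrix (Fin n) (Fin n) F) ∧
          x = eMu ψ n μ * MonoidAlgebra.single p 1 * eMu ψ n μ} =
      Submodule.span ℂ {x : MonoidAlgebra ℂ (GL (Fin n) F) |
        ∃ l : GL (Fin n) F, inLmu μ (l : Matrix (Fin n) (Fin n) F) ∧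
          x = eMu ψ n μ * MonoidAlgebra.single l 1 * eMu ψ n μ} := by
  apply le_antisymm
  · rw [Submodule.span_le]
    rintro x ⟨p, hp, rfl⟩
    obtain ⟨l, u, hl, hu, rfl⟩ := decomp μ p hp
    have key : eMu ψ n μ * MonoidAlgebra.single (l * u) (1 : ℂ) * eMu ψ n μ
        = psiMu ψ n μ u • (eMu ψ n μ * MonoidAlgebra.single l 1 * eMu ψ n μ) := by
      have hsplit : MonoidAlgebra.single (l * u) (1 : ℂ)
          = MonoidAlgebra.single l 1 * MonoidAlgebra.single u 1 := by
        rw [MonoidAlgebra.single_mul_single, one_mul]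
      rw [hsplit]
      simp only [mul_assoc]
      rw [single_mul_eMu ψ μ u hu, mul_smul_comm, mul_smul_comm]
    rw [key]
    exact Submodule.smul_mem _ _ (Submodule.subset_span ⟨l, hl, rfl⟩)
  · apply Submodule.span_mono
    rintro x ⟨l, hl, rfl⟩
    refine ⟨l, ?_, rfl⟩
    intro i j h
    obtain ⟨b, hb, h1, h2⟩ := h
    exact hl i j ⟨b, hb, Or.inl ⟨h1, h2⟩⟩
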